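/- Let d ≥ 3 be an integer, C₀ > 0, and let V : ℝ^d → [0,∞) be continuous with V(x) = 0 whenever |x| ≥ C₀. Let a > 0 and let w : ℝ^d → ℝ satisfy |w(x)| ≤ K min(|x|^{2−d}, 1) for all x ≠ 0, for some constant K. Suppose v : ℝ^d → ℝ is continuous and satisfies v(x) = −a c₀(d) ∫_{ℝ^d} |x−y|^{2−d} V(y) v(y) dy − a^{−1} w(x) for all x ∈ ℝ^d. Then there exists a constant c'' such that |v(x)| ≤ c'' max(|x|^{2−d}, 1) for all x ≠ 0. -/

import Mathlib

open MeasureTheory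

/-- The surface area `ω_d` of the unit sphere `S^{d-1}` in `ℝ^d`,
computed as `d` times the volume of the unit ball. -/
noncomputable def sphereArea (d : ℕ) : ℝ :=
  d * (volume (Metric.ball (0 : EuclideanSpace ℝ (Fin d)) 1)).toReal

/-- The constant `c₀(d) = ((d-2) ω_d)⁻¹`. -/
noncomputable def czero (d : ℕ) : ℝ := (((d : ℝ) - 2) * sphereArea d)⁻¹

/-! Since `max (‖x‖ ^ (2 - d)) 1 ≥ 1`, it suffices to show that `v` is bounded. On the ball of
radius `C₀ + 1` this is continuity. Farther out, the kernel `‖x - y‖ ^ (2 - d)` is at most `1`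
on the support of `V v`, which lies in the ball of radius `C₀`, so the integral is bounded by
`vol (B(0, C₀)) · sup |V v|`, and `|w| ≤ |K|` away from the origin. -/

section

variable {E : Type*} [NormedAddCommGroup E]

theorem hasCompactSupport_of_eq_zero_of_le_norm [ProperSpace E] {f : E → ℝ} {R : ℝ}
    (hf : ∀ x, R ≤ ‖x‖ → f x = 0) : HasCompactSupport f :=
  HasCompactSupport.intro (isCompact_closedBall 0 R) fun x hx =>
    hf x (by simpa using hx : R < ‖x‖).le

theorem abs_integral_norm_sub_rpow_mul_le [MeasurableSpace E] [BorelSpace E] [ProperSpace E]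
    (μ : Measure E) [IsFiniteMeasureOnCompacts μ] {s R M : ℝ} (hs : s ≤ 0) {f : E → ℝ}
    (hfM : ∀ y, |f y| ≤ M) (hf : ∀ y, R ≤ ‖y‖ → f y = 0) {x : E} (hx : R + 1 ≤ ‖x‖) :
    |∫ y, ‖x - y‖ ^ s * f y ∂μ| ≤ M * μ.real (Metric.closedBall 0 R) := by
  rw [← setIntegral_eq_integral_of_forall_compl_eq_zero (s := Metric.closedBall 0 R)
    fun y hy => by simp [hf y (by simpa using hy : R < ‖y‖).le], ← Real.norm_eq_abs]
  refine norm_setIntegral_le_of_norm_le_const measure_closedBall_lt_top fun y hy => ?_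
  have hxy : 1 ≤ ‖x - y‖ := by
    have := norm_sub_norm_le x y
    have : ‖y‖ ≤ R := by simpa using hy
    linarith
  rw [Real.norm_eq_abs, abs_mul, abs_of_nonneg (Real.rpow_nonneg (norm_nonneg _) _)]
  exact (mul_le_of_le_one_left (abs_nonneg _)
    (Real.rpow_le_one_of_one_le_of_nonpos hxy hs)).trans (hfM y)

end

theorem abs_le_abs_of_le_mul_min_one {u K t : ℝ} (h : |u| ≤ K * min t 1) (ht : 0 ≤ t) :
    |u| ≤ |K| :=
  h.trans <| (mul_le_mul_of_nonneg_right (le_abs_self K) (le_min ht zero_le_one)).trans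
    (mul_le_of_le_one_right (abs_nonneg K) (min_le_right _ _))

theorem stmt17_general (d : ℕ) (hd : 3 ≤ d) (C₀ : ℝ)
    (V : EuclideanSpace ℝ (Fin d) → ℝ) (hVcont : Continuous V)
    (hVC₀ : ∀ x, C₀ ≤ ‖x‖ → V x = 0)
    (a : ℝ)
    (w : EuclideanSpace ℝ (Fin d) → ℝ) (K : ℝ)
    (hw : ∀ x : EuclideanSpace ℝ (Fin d), x ≠ 0 →
      |w x| ≤ K * min (‖x‖ ^ ((2 : ℝ) - d)) 1)
    (v : EuclideanSpace ℝ (Fin d) → ℝ) (hvcont : Continuous v)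
    (hveq : ∀ x, v x =
      -a * czero d * (∫ y, ‖x - y‖ ^ ((2 : ℝ) - d) * V y * v y) - a⁻¹ * w x) :
    ∃ c'' : ℝ, ∀ x : EuclideanSpace ℝ (Fin d), x ≠ 0 →
      |v x| ≤ c'' * max (‖x‖ ^ ((2 : ℝ) - d)) 1 := by
  have hexp : (2 : ℝ) - d ≤ 0 := by
    have : (3 : ℝ) ≤ d := by exact_mod_cast hd
    linarith
  obtain ⟨M, hM⟩ := ((hasCompactSupport_of_eq_zero_of_le_norm hVC₀).mul_right (f' := v)
    ).exists_bound_of_continuous (hVcont.mul hvcont)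
  obtain ⟨C₁, hC₁⟩ := (isCompact_closedBall (0 : EuclideanSpace ℝ (Fin d)) (C₀ + 1)
    ).exists_bound_of_continuousOn hvcont.continuousOn
  set B := |a| * |czero d| * (M * volume.real (Metric.closedBall
    (0 : EuclideanSpace ℝ (Fin d)) C₀)) + |a⁻¹| * |K| with hB
  have hbound : ∀ x, x ≠ 0 → |v x| ≤ max C₁ B := by
    intro x hx
    rcases le_or_gt ‖x‖ (C₀ + 1) with hnear | hfar
    · exact (hC₁ x (by simpa using hnear)).trans (le_max_left _ _)
    · have hI := abs_integral_norm_sub_rpow_mul_le volume hexp (f := fun y => V y * v y)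
        hM (fun y hy => by simp [hVC₀ y hy]) hfar.le
      simp only [← mul_assoc] at hI
      have hwK := abs_le_abs_of_le_mul_min_one (hw x hx) (Real.rpow_nonneg (norm_nonneg x) _)
      refine le_trans ?_ (le_max_right _ _)
      calc |v x| ≤ |a| * |czero d| * |∫ y, ‖x - y‖ ^ ((2 : ℝ) - d) * V y * v y|
            + |a⁻¹| * |w x| := by
            rw [hveq x, ← abs_neg a, ← abs_mul, ← abs_mul, ← abs_mul]
            exact abs_sub _ _
        _ ≤ B := by rw [hB]; gcongr
  refine ⟨max (max C₁ B) 0, fun x hx => ?_⟩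
  calc |v x| ≤ max (max C₁ B) 0 * 1 := by
        rw [mul_one]; exact (hbound x hx).trans (le_max_left _ _)
    _ ≤ max (max C₁ B) 0 * max (‖x‖ ^ ((2 : ℝ) - d)) 1 :=
        mul_le_mul_of_nonneg_left (le_max_right _ _) (le_max_right _ _)

theorem stmt17 (d : ℕ) (hd : 3 ≤ d) (C₀ : ℝ) (hC₀ : 0 < C₀)
    (V : EuclideanSpace ℝ (Fin d) → ℝ) (hVcont : Continuous V) (hV0 : ∀ x, 0 ≤ V x)
    (hVC₀ : ∀ x, C₀ ≤ ‖x‖ → V x = 0)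
    (a : ℝ) (ha : 0 < a)
    (w : EuclideanSpace ℝ (Fin d) → ℝ) (K : ℝ)
    (hw : ∀ x : EuclideanSpace ℝ (Fin d), x ≠ 0 →
      |w x| ≤ K * min (‖x‖ ^ ((2 : ℝ) - d)) 1)
    (v : EuclideanSpace ℝ (Fin d) → ℝ) (hvcont : Continuous v)
    (hveq : ∀ x, v x =
      -a * czero d * (∫ y, ‖x - y‖ ^ ((2 : ℝ) - d) * V y * v y) - a⁻¹ * w x) :
    ∃ c'' : ℝ, ∀ x : EuclideanSpace ℝ (Fin d), x ≠ 0 →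
      |v x| ≤ c'' * max (‖x‖ ^ ((2 : ℝ) - d)) 1 :=
  stmt17_general d hd C₀ V hVcont hVC₀ a w K hw v hvcont hveq
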